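/- Under the hard concrete construction with u uniform on (0,1), the probability that the gate e is nonzero equals Sigmoid(log α − β·log(−γ/δ)). -/

import Mathlib

/-! The clamped gate is nonzero iff the stretched sample is positive, i.e. iff the sigmoid
exceeds `-γ / (δ - γ) = σ (log (-γ / δ))`. As `σ` is strictly monotone and inverts the logit
`log u - log (1 - u)`, this says `u > σ (β log (-γ / δ) - log α)`, an interval of length
`1 - σ (β log (-γ / δ) - log α) = σ (log α - β log (-γ / δ))`. -/

open MeasureTheory Real

lemma min_one_max_zero_ne_zero_iff {y : ℝ} : min 1 (max 0 y) ≠ 0 ↔ 0 < y := by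
  constructor
  · intro h
    by_contra! hy
    simp [max_eq_left hy] at h
  · intro hy
    exact (lt_min one_pos (lt_max_of_lt_right hy)).ne'

lemma sigmoid_log_sub_log {a b : ℝ} (ha : 0 < a) (hb : 0 < b) :
    sigmoid (log a - log b) = a / (a + b) := by
  rw [sigmoid_def, neg_sub, exp_sub, exp_log ha, exp_log hb]
  field_simp

lemma sigmoid_log_sub_log_one_sub {u : ℝ} (hu₀ : 0 < u) (hu₁ : u < 1) :
    sigmoid (log u - log (1 - u)) = u := by
  rw [sigmoid_log_sub_log hu₀ (sub_pos.2 hu₁), add_sub_cancel, div_one]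

lemma sigmoid_log_neg_div {γ δ : ℝ} (hγ : γ < 0) (hδ : 0 < δ) :
    sigmoid (log (-γ / δ)) = -γ / (δ - γ) := by
  rw [log_div (by linarith) hδ.ne', sigmoid_log_sub_log (neg_pos.2 hγ) hδ, neg_add_eq_sub]

lemma stretch_pos_iff {γ δ s : ℝ} (hγ : γ < 0) (hδ : 0 < δ) :
    0 < s * (δ - γ) + γ ↔ sigmoid (log (-γ / δ)) < s := by
  rw [sigmoid_log_neg_div hγ hδ, div_lt_iff₀ (by linarith)]
  constructor <;> intro h <;> linarith

lemma hardConcrete_stretch_pos_iff {c β γ δ u : ℝ} (hβ : 0 < β) (hγ : γ < 0) (hδ : 0 < δ)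
    (hu₀ : 0 < u) (hu₁ : u < 1) :
    0 < sigmoid ((log u - log (1 - u) + c) / β) * (δ - γ) + γ ↔
      sigmoid (β * log (-γ / δ) - c) < u := by
  conv_rhs => rw [← sigmoid_log_sub_log_one_sub hu₀ hu₁]
  rw [stretch_pos_iff hγ hδ, sigmoid_lt_iff, sigmoid_lt_iff, lt_div_iff₀ hβ]
  constructor <;> intro h <;> linarith

lemma setOf_hardConcrete_stretch_pos {c β γ δ : ℝ} (hβ : 0 < β) (hγ : γ < 0) (hδ : 0 < δ) :
    {u ∈ Set.Ioo (0 : ℝ) 1 | 0 < sigmoid ((log u - log (1 - u) + c) / β) * (δ - γ) + γ}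
      = Set.Ioo (sigmoid (β * log (-γ / δ) - c)) 1 := by
  ext u
  constructor
  · rintro ⟨⟨hu₀, hu₁⟩, hpos⟩
    exact ⟨(hardConcrete_stretch_pos_iff hβ hγ hδ hu₀ hu₁).1 hpos, hu₁⟩
  · rintro ⟨hlt, hu₁⟩
    have hu₀ : 0 < u := (sigmoid_pos _).trans hlt
    exact ⟨⟨hu₀, hu₁⟩, (hardConcrete_stretch_pos_iff hβ hγ hδ hu₀ hu₁).2 hlt⟩

theorem hard_concrete_nonzero_prob_general (α β γ δ : ℝ) (hβ : 0 < β)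
    (hγ : γ < 0) (hδ : 1 < δ) :
    volume {u ∈ Set.Ioo (0 : ℝ) 1 |
        min 1 (max 0
          ((1 / (1 + Real.exp (-((Real.log u - Real.log (1 - u) + Real.log α) / β))))
            * (δ - γ) + γ)) ≠ 0}
      = ENNReal.ofReal (1 / (1 + Real.exp (-(Real.log α - β * Real.log (-γ / δ))))) := by
  simp only [one_div, ← sigmoid_def, min_one_max_zero_ne_zero_iff]
  rw [setOf_hardConcrete_stretch_pos hβ hγ (by linarith), volume_Ioo, ← sigmoid_neg, neg_sub]

/-- Hard concrete distribution: with `u` uniform on `(0,1)`, the probability that the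
gate `e(u) = min 1 (max 0 (Sigmoid((log u − log(1−u) + log α)/β)·(δ−γ)+γ))` is nonzero
equals `Sigmoid(log α − β·log(−γ/δ))`. -/
theorem hard_concrete_nonzero_prob (α β γ δ : ℝ) (hα : 0 < α) (hβ : 0 < β)
    (hγ : γ < 0) (hδ : 1 < δ) :
    volume {u ∈ Set.Ioo (0 : ℝ) 1 |
        min 1 (max 0
          ((1 / (1 + Real.exp (-((Real.log u - Real.log (1 - u) + Real.log α) / β))))
            * (δ - γ) + γ)) ≠ 0}
      = ENNReal.ofReal (1 / (1 + Real.exp (-(Real.log α - β * Real.log (-γ / δ))))) :=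
  hard_concrete_nonzero_prob_general α β γ δ hβ hγ hδ
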